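/- Concentration of visible coverage (Lemma 2): Fix constants c > 0, L̄ > 0 and δ ∈ [0,1), and work in the asymptotic regime of the SSE model. Then for every ε > 0, Pr( |Φ_v − (1 − e^{−c(1−δ)})| > ε·(1 − e^{−c(1−δ)}) ) → 0 as n → ∞. -/

import Mathlib

open Filter

noncomputable section

/-- Index family for the joint independence of starts and erasure indicators. -/
def sseType (n K L : ℕ) : Fin K ⊕ (Fin K × Fin L) → Type
  | .inl _ => ZMod n
  | .inr _ => Bool

/-- Measurable-space structure on the index family (discrete σ-algebras). -/
def sseTypeMS (n K L : ℕ) : ∀ t : Fin K ⊕ (Fin K × Fin L), MeasurableSpace (sseType n K L t)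
  | .inl _ => inferInstanceAs (MeasurableSpace (ZMod n))
  | .inr _ => inferInstanceAs (MeasurableSpace Bool)

/-- The combined family of random variables (starts and erasure indicators). -/
def sseVars {Ω : Type} {n K L : ℕ} (S : Fin K → Ω → ZMod n) (E : Fin K → Fin L → Ω → Bool) :
    ∀ t : Fin K ⊕ (Fin K × Fin L), Ω → sseType n K L t
  | .inl i => S i
  | .inr p => E p.1 p.2

/-- The shotgun-sequencing-with-erasures (SSE) probabilistic model:
start positions `S 1, …, S K` i.i.d. uniform on `ZMod n`, erasure indicators `E i j`
i.i.d. Bernoulli(δ), with all of them jointly independent. -/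
structure SSE (n K L : ℕ) (δ : ℝ) where
  Ω : Type
  [mΩ : MeasurableSpace Ω]
  μ : MeasureTheory.Measure Ω
  isProb : MeasureTheory.IsProbabilityMeasure μ
  S : Fin K → Ω → ZMod n
  E : Fin K → Fin L → Ω → Bool
  measS : ∀ i, Measurable (S i)
  measE : ∀ i j, Measurable (E i j)
  unifS : ∀ i s, μ {ω | S i ω = s} = (n : ENNReal)⁻¹
  bernE : ∀ i j, μ {ω | E i j ω = true} = ENNReal.ofReal δ
  indep : ProbabilityTheory.iIndepFun (m := sseTypeMS n K L) (sseVars S E) μ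

attribute [instance] SSE.mΩ
attribute [instance] SSE.isProb

/-- SSE model together with a uniformly random input string, independent of the
starts and erasures. -/
structure SSEX (n K L : ℕ) (δ : ℝ) extends SSE n K L δ where
  X : Ω → (ZMod n → Bool)
  measX : Measurable X
  unifX : ∀ v : ZMod n → Bool, μ {ω | X ω = v} = ((2 : ENNReal) ^ n)⁻¹
  indepX : ProbabilityTheory.IndepFun X (fun ω => (fun i => S i ω, fun i j => E i j ω)) μ

/-- SSE model together with a uniformly random message `W` on `{1,…,Mn}`
(modelled as `Fin Mn`), independent of the starts and erasures. -/
structure SSEW (n K L : ℕ) (δ : ℝ) (Mn : ℕ) extends SSE n K L δ where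
  W : Ω → Fin Mn
  measW : Measurable W
  unifW : ∀ w, μ {ω | W ω = w} = (Mn : ENNReal)⁻¹
  indepW : ProbabilityTheory.IndepFun W (fun ω => (fun i => S i ω, fun i j => E i j ω)) μ

variable {n K L : ℕ} {δ : ℝ}

/-- Read `i`: the `L`-length cyclic substring of `x` starting at `S i`, with erased
symbols replaced by `none` (= ⊥). -/
def SSE.read (M : SSE n K L δ) (x : ZMod n → Bool) (ω : M.Ω) (i : Fin K) :
    Fin L → Option Bool :=
  fun j => if M.E i j ω then none else some (x (M.S i ω + ((j : ℕ) : ZMod n)))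

/-- The channel output: the multiset of the `K` reads. -/
def SSE.output (M : SSE n K L δ) (x : ZMod n → Bool) (ω : M.Ω) :
    Multiset (Fin L → Option Bool) :=
  Finset.univ.val.map (M.read x ω)

/-- Position `m` is visibly covered: some read covers it with an unerased symbol. -/
def SSE.VisiblyCovered (M : SSE n K L δ) (ω : M.Ω) (m : ZMod n) : Prop :=
  ∃ (i : Fin K) (j : Fin L), M.S i ω + ((j : ℕ) : ZMod n) = m ∧ M.E i j ω = false

/-- The number 𝒫 of visibly covered positions. -/
def SSE.coveredCount (M : SSE n K L δ) (ω : M.Ω) : ℕ :=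
  Set.ncard {m : ZMod n | M.VisiblyCovered ω m}

/-- The visible coverage Φ_v: the fraction of the `n` positions that are visibly covered. -/
def SSE.Phi (M : SSE n K L δ) (ω : M.Ω) : ℝ := (M.coveredCount ω : ℝ) / n

/-- The number of true islands: the number of reads `i` such that no other read `j`
has its start in the cyclic window `{S i, S i + 1, …, S i + L - 1}`. -/
def SSE.trueIslandCount (M : SSE n K L δ) (ω : M.Ω) : ℕ :=
  (Finset.univ.filter (fun i : Fin K =>
    ∀ j : Fin K, j ≠ i → ∀ l : Fin L, M.S j ω ≠ M.S i ω + ((l : ℕ) : ZMod n))).card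

/-- Cyclic distance from read `i` to read `j` in the true ordering
(reads ordered cyclically by start position, ties broken by index). -/
def SSE.dist (M : SSE n K L δ) (ω : M.Ω) (i j : Fin K) : ℕ :=
  if (M.S j ω - M.S i ω).val = 0 then (if i < j then 0 else n)
  else (M.S j ω - M.S i ω).val

/-- The cyclic gap `g_i` from the start of read `i` to the start of its true successor. -/
def SSE.trueGap (M : SSE n K L δ) (ω : M.Ω) (i : Fin K) : ℕ :=
  if h : (Finset.univ.erase i).Nonempty then
    ((Finset.univ.erase i).image (fun j => M.dist ω i j)).min' (h.image _)
  else n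

/-- The true overlap `o_i = max (0, L − g_i)` of read `i` with its true successor. -/
def SSE.trueOverlap (M : SSE n K L δ) (ω : M.Ω) (i : Fin K) : ℕ := L - M.trueGap ω i

/-- The true merging suffix size `ω^t_i`: the number of unerased symbols among the last
`o_i` symbols of read `i` (`0` if `o_i = 0`). -/
def SSE.suffixSize (M : SSE n K L δ) (ω : M.Ω) (i : Fin K) : ℕ :=
  (Finset.univ.filter (fun j : Fin L =>
    L - M.trueOverlap ω i ≤ (j : ℕ) ∧ M.E i j ω = false)).card

open Classical in
/-- `G(τ)`: the number of reads whose true merging suffix size equals `τ·log₂ n`. -/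
def SSE.G (M : SSE n K L δ) (ω : M.Ω) (τ : ℝ) : ℕ :=
  (Finset.univ.filter (fun i : Fin K =>
    (M.suffixSize ω i : ℝ) = τ * Real.logb 2 n)).card

/-- Read length in the asymptotic regime: `L(n) = ⌈Lbar log₂ n⌉`. -/
def Lof (Lbar : ℝ) (n : ℕ) : ℕ := ⌈Lbar * Real.logb 2 n⌉₊

/-- Number of reads in the asymptotic regime: `K(n) = ⌈c n / L(n)⌉`. -/
def Kof (c Lbar : ℝ) (n : ℕ) : ℕ := ⌈c * (n : ℝ) / (Lof Lbar n : ℝ)⌉₊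

/-- `z` (a string with erasures, `none` = ⊥) matches `x` at position `s`: every unerased
symbol of `z` agrees with the corresponding (cyclic) symbol of `x`. -/
def ZMatches {n : ℕ} (x : ZMod n → Bool) {l : ℕ} (z : Fin l → Option Bool)
    (s : ZMod n) : Prop :=
  ∀ (j : Fin l) (b : Bool), z j = some b → x (s + ((j : ℕ) : ZMod n)) = b

open Classical in
/-- `M_z`: the number of reads whose window matches `z`. -/
def SSEX.Mz (M : SSEX n K L δ) (ω : M.Ω) {l : ℕ} (z : Fin l → Option Bool) : ℕ :=
  (Finset.univ.filter (fun i : Fin K => ZMatches (M.X ω) z (M.S i ω))).card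

/-- `size(z)`: the number of unerased symbols of `z`. -/
def sizeZ {l : ℕ} (z : Fin l → Option Bool) : ℕ :=
  (Finset.univ.filter (fun j : Fin l => z j ≠ none)).card

/-- `τ_ue(z) = size(z) / log₂ n`. -/
def tauUE (n : ℕ) {l : ℕ} (z : Fin l → Option Bool) : ℝ :=
  (sizeZ z : ℝ) / Real.logb 2 n

/-- The probability of a decoding error for a given encoder/decoder pair, when the
transmitted codeword is `enc W`. -/
def SSEW.errProb {n K L : ℕ} {δ : ℝ} {Mn : ℕ} (M : SSEW n K L δ Mn)
    (enc : Fin Mn → (ZMod n → Bool))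
    (dec : Multiset (Fin L → Option Bool) → Fin Mn) : ℝ :=
  (M.μ {ω | dec (M.toSSE.output (enc (M.W ω)) ω) ≠ M.W ω}).toReal

/-- The β(d) penalty function, with `α = c/(Lbar(1−δ))`. -/
def betaFn (c Lbar δ : ℝ) (d : ℝ) : ℝ :=
  (d / (1 - δ)) * (c / Lbar) ^ 2 * Real.exp (-c) *
    (Real.exp (c / (Lbar * (1 - δ)) * d) * (Real.exp (c / (Lbar * (1 - δ))) - 1) /
        (Real.exp (c / (Lbar * (1 - δ)) * d) - 1) -
      Real.exp (2 * (c / (Lbar * (1 - δ))) * d) *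
          ((Real.exp (c / (Lbar * (1 - δ)) * (1 + d)) - Real.exp (c / (Lbar * (1 - δ)))) -
            d * (Real.exp (c / (Lbar * (1 - δ)) * (1 + d)) - 1)) /
        (Real.exp (c / (Lbar * (1 - δ)) * d) - 1) ^ 2)

/-!
Write `Φ_v = 1 - (1/n) ∑ₘ Yₘ`, where `Yₘ` indicates that position `m` is not visibly covered.
A read misses `m` with probability `1 - (1-δ)L/n`, so `E Yₘ = p := (1 - (1-δ)L/n)^K`, which tends
to `e^{-c(1-δ)}`. Unless `m' - m` is a difference of two offsets in `[0, L)` (at most `L²` choices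
of `m'`), no read touches both `m` and `m'`, and `E[Yₘ Yₘ'] = (1 - 2(1-δ)L/n)^K ≤ p²`. Hence
`Var Φ_v ≤ L²/n = O(log² n / n)`, and Chebyshev's inequality concludes. All probabilities are
finite sums against the law of the reads' starts and erasure patterns, which the joint
independence of the model makes a product of uniform and Bernoulli weights.
-/

open Finset MeasureTheory ProbabilityTheory Topology

section WeightedSums

variable {α ι : Type*} [Fintype α] [Fintype ι] {w : α → ℝ}

theorem sum_filter_lt_abs_le_sum_mul_sq_div (hw : ∀ x, 0 ≤ w x) (f : α → ℝ) {t : ℝ}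
    (ht : 0 < t) : ∑ x with t < |f x|, w x ≤ (∑ x, w x * f x ^ 2) / t ^ 2 := by
  rw [le_div_iff₀ (by positivity), sum_mul]
  calc ∑ x with t < |f x|, w x * t ^ 2
      ≤ ∑ x with t < |f x|, w x * f x ^ 2 := by
        refine sum_le_sum fun x hx => mul_le_mul_of_nonneg_left ?_ (hw x)
        simpa only [sq_abs] using pow_le_pow_left₀ ht.le (mem_filter.mp hx).2.le 2
    _ ≤ ∑ x, w x * f x ^ 2 :=
        sum_le_sum_of_subset_of_nonneg (filter_subset _ _) fun x _ _ => by
          have := hw x; positivity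

theorem sum_mul_sum_sub_sq_le_sum_card (hw : ∀ x, 0 ≤ w x) (hw1 : ∑ x, w x = 1)
    {g : ι → α → ℝ} (hg : ∀ i x, g i x ∈ Set.Icc (0 : ℝ) 1) {p : ℝ}
    (hp : ∀ i, ∑ x, w x * g i x = p) (near : ι → Finset ι)
    (hfar : ∀ i j, j ∉ near i → ∑ x, w x * (g i x * g j x) ≤ p ^ 2) :
    ∑ x, w x * (∑ i, (g i x - p)) ^ 2 ≤ ∑ i, (#(near i) : ℝ) := by
  classical
  have hcov : ∀ i j, ∑ x, w x * ((g i x - p) * (g j x - p))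
      = ∑ x, w x * (g i x * g j x) - p ^ 2 := by
    intro i j
    have hexp : ∀ x, w x * ((g i x - p) * (g j x - p))
        = w x * (g i x * g j x) - p * (w x * g j x) - p * (w x * g i x) + p ^ 2 * w x :=
      fun x => by ring
    simp only [hexp, sum_add_distrib, sum_sub_distrib, ← mul_sum, hp, hw1]
    ring
  have hdev : ∀ i x, |g i x - p| ≤ 1 := by
    intro i x
    have hp0 : 0 ≤ p := hp i ▸ sum_nonneg fun x _ => mul_nonneg (hw x) (hg i x).1
    have hp1 : p ≤ 1 := hp i ▸ hw1 ▸ sum_le_sum fun x _ => mul_le_of_le_one_right (hw x) (hg i x).2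
    rw [abs_le]
    constructor <;> linarith [(hg i x).1, (hg i x).2]
  have hpair : ∀ i j, ∑ x, w x * ((g i x - p) * (g j x - p)) ≤ if j ∈ near i then 1 else 0 := by
    intro i j
    split_ifs with hj
    · calc ∑ x, w x * ((g i x - p) * (g j x - p)) ≤ ∑ x, w x * 1 := by
            gcongr with x
            · exact hw x
            · calc (g i x - p) * (g j x - p) ≤ |g i x - p| * |g j x - p| := by
                    rw [← abs_mul]; exact le_abs_self _
                _ ≤ 1 := mul_le_one₀ (hdev i x) (abs_nonneg _) (hdev j x)
        _ = 1 := by simp [hw1]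
    · linarith [hcov i j, hfar i j hj]
  calc ∑ x, w x * (∑ i, (g i x - p)) ^ 2
      = ∑ i, ∑ j, ∑ x, w x * ((g i x - p) * (g j x - p)) := by
        simp_rw [sq, sum_mul_sum, mul_sum]
        rw [sum_comm]
        exact sum_congr rfl fun i _ => sum_comm
    _ ≤ ∑ i, ∑ j, if j ∈ near i then (1 : ℝ) else 0 := by gcongr with i _ j; exact hpair i j
    _ = ∑ i, (#(near i) : ℝ) := by simp

end WeightedSums

theorem tendsto_one_sub_pow_of_tendsto_mul {β : Type*} {l : Filter β} {k : β → ℕ} {b : β → ℝ}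
    {t : ℝ} (hb : Tendsto b l (𝓝 0)) (hkb : Tendsto (fun a => k a * b a) l (𝓝 t)) :
    Tendsto (fun a => (1 - b a) ^ k a) l (𝓝 (Real.exp (-t))) := by
  have hsmall : ∀ᶠ a in l, |b a| < 1 / 2 := by
    simpa using hb.abs.eventually (gt_mem_nhds (show |(0 : ℝ)| < 1 / 2 by norm_num))
  -- `k log (1 - b) = -k b + k (log (1 - b) + b)`, and the Taylor remainder is `O(b²)`
  have hrem : Tendsto (fun a => k a * (Real.log (1 - b a) + b a)) l (𝓝 0) := by
    have hbound : Tendsto (fun a => 2 * |k a * b a| * |b a|) l (𝓝 0) := by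
      simpa using ((hkb.abs.const_mul 2).mul hb.abs)
    refine squeeze_zero_norm' ?_ hbound
    filter_upwards [hsmall] with a ha
    have h := Real.abs_log_sub_add_sum_range_le (show |b a| < 1 by linarith) 1
    simp only [range_one, sum_singleton, zero_add, pow_one, Nat.cast_zero, div_one] at h
    rw [Real.norm_eq_abs, abs_mul, Nat.abs_cast, add_comm]
    calc (k a : ℝ) * |b a + Real.log (1 - b a)| ≤ k a * (|b a| ^ 2 / (1 - |b a|)) := by
          gcongr
      _ ≤ k a * (2 * |b a| ^ 2) := by
          gcongr
          rw [div_le_iff₀ (by linarith)]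
          nlinarith [sq_nonneg (b a)]
      _ = 2 * |k a * b a| * |b a| := by
          rw [abs_mul, Nat.abs_cast]; ring
  have hlog : Tendsto (fun a => k a * Real.log (1 - b a)) l (𝓝 (-t)) := by
    simpa using (hkb.neg.add hrem).congr fun a => by ring
  refine ((Real.continuous_exp.tendsto _).comp hlog).congr' ?_
  filter_upwards [hsmall] with a ha
  have hpos : 0 < 1 - b a := by linarith [le_abs_self (b a)]
  simp [← Real.log_pow, Real.exp_log (pow_pos hpos _)]

section Regime

variable {c Lbar : ℝ}

theorem Lof_pos (hLbar : 0 < Lbar) (hn : 2 ≤ n) : 0 < Lof Lbar n :=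
  Nat.ceil_pos.mpr (mul_pos hLbar (Real.logb_pos one_lt_two (by exact_mod_cast hn)))

theorem isBigO_Lof_log (hLbar : 0 ≤ Lbar) :
    (fun n : ℕ => (Lof Lbar n : ℝ)) =O[atTop] (fun n : ℕ => Real.log n) := by
  have hlog : ∀ᶠ n : ℕ in atTop, 1 ≤ Real.log n :=
    (Real.tendsto_log_atTop.comp tendsto_natCast_atTop_atTop).eventually_ge_atTop 1
  refine Asymptotics.IsBigO.of_bound (Lbar / Real.log 2 + 1) ?_
  filter_upwards [hlog] with n hn
  have hlogb : 0 ≤ Lbar * Real.logb 2 n := mul_nonneg hLbar (by rw [Real.logb]; positivity)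
  rw [Real.norm_natCast, Real.norm_of_nonneg (by linarith)]
  calc (Lof Lbar n : ℝ) ≤ Lbar * Real.logb 2 n + 1 := (Nat.ceil_lt_add_one hlogb).le
    _ = Lbar / Real.log 2 * Real.log n + 1 := by rw [Real.logb]; ring
    _ ≤ (Lbar / Real.log 2 + 1) * Real.log n := by linarith

theorem tendsto_Lof_div (hLbar : 0 ≤ Lbar) :
    Tendsto (fun n : ℕ => (Lof Lbar n : ℝ) / n) atTop (𝓝 0) :=
  ((isBigO_Lof_log hLbar).trans_isLittleO
    (Real.isLittleO_log_id_atTop.comp_tendsto tendsto_natCast_atTop_atTop)).tendsto_div_nhds_zero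

theorem tendsto_Lof_sq_div (hLbar : 0 ≤ Lbar) :
    Tendsto (fun n : ℕ => (Lof Lbar n : ℝ) ^ 2 / n) atTop (𝓝 0) :=
  (((isBigO_Lof_log hLbar).pow 2).trans_isLittleO
    (Real.isLittleO_pow_log_id_atTop.comp_tendsto
      tendsto_natCast_atTop_atTop)).tendsto_div_nhds_zero

theorem Kof_mul_Lof_div_mem_Icc (hc : 0 ≤ c) (hLbar : 0 < Lbar) (hn : 2 ≤ n) :
    (Kof c Lbar n : ℝ) * Lof Lbar n / n ∈ Set.Icc c (c + Lof Lbar n / n) := by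
  have hL : (0 : ℝ) < Lof Lbar n := by exact_mod_cast Lof_pos hLbar hn
  have hn0 : (0 : ℝ) < n := by positivity
  have hK := Nat.ceil_lt_add_one (show 0 ≤ c * n / Lof Lbar n by positivity)
  have hK' := Nat.le_ceil (c * n / Lof Lbar n)
  rw [← Kof] at hK hK'
  rw [div_le_iff₀ hL] at hK'
  constructor
  · rw [le_div_iff₀ hn0]; linarith
  · rw [div_le_iff₀ hn0, add_mul, div_mul_cancel₀ _ hn0.ne']
    have := mul_lt_mul_of_pos_right hK hL
    rw [add_mul, div_mul_cancel₀ _ hL.ne', one_mul] at this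
    linarith

theorem tendsto_Kof_mul_Lof_div (hc : 0 ≤ c) (hLbar : 0 < Lbar) :
    Tendsto (fun n : ℕ => (Kof c Lbar n : ℝ) * Lof Lbar n / n) atTop (𝓝 c) := by
  refine tendsto_of_tendsto_of_tendsto_of_le_of_le' tendsto_const_nhds
    (by simpa using (tendsto_Lof_div hLbar.le).const_add c) ?_ ?_ <;>
  filter_upwards [eventually_ge_atTop 2] with n hn
  exacts [(Kof_mul_Lof_div_mem_Icc hc hLbar hn).1, (Kof_mul_Lof_div_mem_Icc hc hLbar hn).2]

theorem tendsto_missProb (hc : 0 ≤ c) (hLbar : 0 < Lbar) (δ : ℝ) :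
    Tendsto (fun n : ℕ => (1 - (1 - δ) * Lof Lbar n / n) ^ Kof c Lbar n) atTop
      (𝓝 (Real.exp (-(c * (1 - δ))))) := by
  refine tendsto_one_sub_pow_of_tendsto_mul ?_ ?_
  · simpa [mul_div_assoc] using (tendsto_Lof_div hLbar.le).const_mul (1 - δ)
  · rw [mul_comm c]
    exact ((tendsto_Kof_mul_Lof_div hc hLbar).const_mul (1 - δ)).congr fun n => by ring

end Regime

namespace SSE

abbrev ReadData (n L : ℕ) := ZMod n × (Fin L → Bool)

def ReadData.Misses (m : ZMod n) (r : ReadData n L) : Prop :=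
  ∀ j : Fin L, r.1 + ((j : ℕ) : ZMod n) = m → r.2 j = true

instance (m : ZMod n) : DecidablePred (ReadData.Misses (L := L) m) :=
  fun _ => inferInstanceAs (Decidable (∀ _, _))

def erasureWeight (δ : ℝ) (b : Bool) : ℝ := if b then δ else 1 - δ

def readWeight (δ : ℝ) (r : ReadData n L) : ℝ := (n : ℝ)⁻¹ * ∏ j, erasureWeight δ (r.2 j)

def configWeight (δ : ℝ) (x : Fin K → ReadData n L) : ℝ := ∏ i, readWeight δ (x i)

theorem erasureWeight_nonneg (hδ0 : 0 ≤ δ) (hδ1 : δ ≤ 1) (b : Bool) : 0 ≤ erasureWeight δ b := by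
  cases b <;> simp [erasureWeight, hδ0, hδ1]

theorem readWeight_nonneg (hδ0 : 0 ≤ δ) (hδ1 : δ ≤ 1) (r : ReadData n L) :
    0 ≤ readWeight δ r :=
  mul_nonneg (by positivity) (prod_nonneg fun _ _ => erasureWeight_nonneg hδ0 hδ1 _)

theorem configWeight_nonneg (hδ0 : 0 ≤ δ) (hδ1 : δ ≤ 1) (x : Fin K → ReadData n L) :
    0 ≤ configWeight δ x :=
  prod_nonneg fun _ _ => readWeight_nonneg hδ0 hδ1 _

theorem sum_prod_erasureWeight_filter {ι : Type*} [Fintype ι] [DecidableEq ι] (J : Finset ι) :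
    ∑ η : ι → Bool with ∀ j ∈ J, η j = true, ∏ j, erasureWeight δ (η j) = δ ^ #J := by
  calc ∑ η : ι → Bool with ∀ j ∈ J, η j = true, ∏ j, erasureWeight δ (η j)
      = ∑ η : ι → Bool, ∏ j, if j ∈ J → η j = true then erasureWeight δ (η j) else 0 := by
        simp only [sum_filter, Fintype.prod_ite_zero]
    _ = ∏ j, ∑ b : Bool, if j ∈ J → b = true then erasureWeight δ b else 0 :=
        (Fintype.prod_sum fun j b => if j ∈ J → b = true then erasureWeight δ b else 0).symm
    _ = ∏ j, if j ∈ J then δ else 1 := by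
        refine prod_congr rfl fun j _ => ?_
        by_cases hj : j ∈ J <;> simp [hj, erasureWeight]
    _ = δ ^ #J := by rw [prod_ite_mem, univ_inter, prod_const]

def hits (L : ℕ) (T : Finset (ZMod n)) (σ : ZMod n) : Finset (Fin L) :=
  {j | σ + ((j : ℕ) : ZMod n) ∈ T}

theorem sum_card_hits [NeZero n] (T : Finset (ZMod n)) : ∑ σ, #(hits L T σ) = #T * L := by
  calc ∑ σ, #(hits L T σ) = ∑ j : Fin L, #{σ | σ + ((j : ℕ) : ZMod n) ∈ T} := by
        simp only [hits, card_filter]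
        exact sum_comm
    _ = ∑ _j : Fin L, #T := by
        refine sum_congr rfl fun j _ => ?_
        rw [← card_map (Equiv.addRight ((j : ℕ) : ZMod n)).toEmbedding]
        congr 1
        ext m
        simp
    _ = #T * L := by simp [mul_comm]

/-- A read started at `σ` misses `T` iff its symbols at `hits L T σ` are all erased, which has
probability `δ ^ #(hits L T σ)`; this is linear in the number of hits while it is at most one. -/
theorem sum_readWeight_filter_misses [NeZero n] (T : Finset (ZMod n))
    (hT : ∀ σ, #(hits L T σ) ≤ 1) :
    ∑ r : ReadData n L with ∀ m ∈ T, r.Misses m, readWeight δ r = 1 - (1 - δ) * (#T * L) / n := by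
  have hmiss : ∀ σ (η : Fin L → Bool),
      (∀ m ∈ T, ReadData.Misses m (σ, η)) ↔ ∀ j ∈ hits L T σ, η j = true := by
    intro σ η
    simp only [ReadData.Misses, hits, mem_filter, mem_univ, true_and]
    exact ⟨fun h j hj => h _ hj j rfl, fun h m hm j hj => h j (hj ▸ hm)⟩
  have hpow : ∀ σ, δ ^ #(hits L T σ) = 1 - (1 - δ) * #(hits L T σ) := by
    intro σ
    rcases Nat.le_one_iff_eq_zero_or_eq_one.mp (hT σ) with h | h <;> simp [h]
  have hn : (n : ℝ) ≠ 0 := Nat.cast_ne_zero.mpr (NeZero.ne n)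
  calc ∑ r : ReadData n L with ∀ m ∈ T, r.Misses m, readWeight δ r
      = ∑ σ : ZMod n, (n : ℝ)⁻¹ * δ ^ #(hits L T σ) := by
        rw [sum_filter, Fintype.sum_prod_type]
        refine sum_congr rfl fun σ _ => ?_
        simp only [hmiss, readWeight, ← sum_prod_erasureWeight_filter, mul_sum, ← sum_filter]
        convert rfl
    _ = 1 - (1 - δ) * (#T * L) / n := by
        rw [← mul_sum]
        simp only [hpow, sum_sub_distrib, ← mul_sum, sum_const, card_univ, ZMod.card]
        rw [← Nat.cast_sum, sum_card_hits]
        field_simp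
        push_cast
        ring

theorem natCast_fin_injective (hLn : L ≤ n) :
    Function.Injective fun j : Fin L => ((j : ℕ) : ZMod n) := fun j j' h =>
  Fin.ext (CharP.natCast_injOn_Iio (ZMod n) n (j.2.trans_le hLn) (j'.2.trans_le hLn) h)

theorem card_hits_singleton_le_one (hLn : L ≤ n) (m σ : ZMod n) : #(hits L {m} σ) ≤ 1 := by
  refine card_le_one.mpr fun j hj j' hj' => ?_
  simp only [hits, mem_filter, mem_univ, mem_singleton, true_and] at hj hj'
  exact natCast_fin_injective hLn (add_left_cancel (hj.trans hj'.symm))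

/-- No single read covers both `m` and a position outside `nearby L m`. -/
def nearby (L : ℕ) (m : ZMod n) : Finset (ZMod n) :=
  image (fun q : Fin L × Fin L => m + ((q.1 : ℕ) : ZMod n) - ((q.2 : ℕ) : ZMod n)) univ

theorem card_nearby_le (m : ZMod n) : #(nearby L m) ≤ L ^ 2 :=
  card_image_le.trans_eq (by simp [sq])

theorem ne_of_notMem_nearby (hL : 0 < L) {m m' : ZMod n} (h : m' ∉ nearby L m) : m ≠ m' := by
  rintro rfl
  exact h (mem_image.mpr ⟨(⟨0, hL⟩, ⟨0, hL⟩), mem_univ _, by simp⟩)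

theorem card_hits_pair_le_one (hLn : L ≤ n) {m m' : ZMod n} (h : m' ∉ nearby L m) (σ : ZMod n) :
    #(hits L {m, m'} σ) ≤ 1 := by
  have hfar : ∀ j j' : Fin L, σ + ((j : ℕ) : ZMod n) = m → σ + ((j' : ℕ) : ZMod n) ≠ m' :=
    fun j j' hj hj' => h (mem_image.mpr ⟨(j', j), mem_univ _, by rw [← hj, ← hj']; ring⟩)
  refine card_le_one.mpr fun j hj j' hj' => ?_
  simp only [hits, mem_filter, mem_univ, mem_insert, mem_singleton, true_and] at hj hj'
  rcases hj with hj | hj <;> rcases hj' with hj' | hj'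
  · exact natCast_fin_injective hLn (add_left_cancel (hj.trans hj'.symm))
  · exact absurd hj' (hfar j j' hj)
  · exact absurd hj (hfar j' j hj')
  · exact natCast_fin_injective hLn (add_left_cancel (hj.trans hj'.symm))

theorem sum_configWeight_filter_forall [NeZero n] (Q : ReadData n L → Prop) [DecidablePred Q] :
    ∑ x : Fin K → ReadData n L with ∀ i, Q (x i), configWeight δ x
      = (∑ r with Q r, readWeight δ r) ^ K := by
  rw [sum_filter, sum_filter, ← Fin.prod_const, Fintype.prod_sum]
  simp only [Fintype.prod_ite_zero, configWeight]
  convert rfl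

theorem sum_configWeight [NeZero n] : ∑ x : Fin K → ReadData n L, configWeight δ x = 1 := by
  have h := sum_readWeight_filter_misses (L := L) (δ := δ) (∅ : Finset (ZMod n)) (by simp [hits])
  simp only [notMem_empty, IsEmpty.forall_iff, implies_true, filter_true, card_empty] at h
  simpa [h] using sum_configWeight_filter_forall (K := K) (δ := δ) (fun _ : ReadData n L => True)

def missIndicator (m : ZMod n) (x : Fin K → ReadData n L) : ℝ :=
  if ∀ i, (x i).Misses m then 1 else 0

def coverage [NeZero n] (x : Fin K → ReadData n L) : ℝ := (#{m | ∃ i, ¬ (x i).Misses m} : ℝ) / n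

theorem coverage_eq [NeZero n] (x : Fin K → ReadData n L) :
    coverage x = 1 - (∑ m, missIndicator m x) / n := by
  have hn : (n : ℝ) ≠ 0 := Nat.cast_ne_zero.mpr (NeZero.ne n)
  have hcard := card_filter_add_card_filter_not (s := univ)
    (fun m : ZMod n => ∀ i, (x i).Misses m)
  simp only [card_univ, ZMod.card, not_forall] at hcard
  simp only [coverage, missIndicator]
  rw [sum_boole, eq_sub_iff_add_eq, ← add_div, div_eq_one_iff_eq hn]
  exact_mod_cast (add_comm _ _).trans hcard

theorem sum_configWeight_mul_missIndicator [NeZero n] (hLn : L ≤ n) (m : ZMod n) :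
    ∑ x : Fin K → ReadData n L, configWeight δ x * missIndicator m x
      = (1 - (1 - δ) * L / n) ^ K := by
  have h := sum_readWeight_filter_misses (δ := δ) {m} (card_hits_singleton_le_one hLn m)
  simp only [mem_singleton, forall_eq, card_singleton, Nat.cast_one, one_mul] at h
  simp only [missIndicator, mul_ite, mul_one, mul_zero, ← sum_filter,
    sum_configWeight_filter_forall, h]

theorem sum_configWeight_mul_missIndicator_mul_le [NeZero n] (hδ0 : 0 ≤ δ) (hδ1 : δ ≤ 1)
    (hL : 0 < L) (hLn : L ≤ n) {m m' : ZMod n} (h : m' ∉ nearby L m) :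
    ∑ x : Fin K → ReadData n L, configWeight δ x * (missIndicator m x * missIndicator m' x)
      ≤ ((1 - (1 - δ) * L / n) ^ K) ^ 2 := by
  have hpair := sum_readWeight_filter_misses (δ := δ) {m, m'} (card_hits_pair_le_one hLn h)
  rw [card_pair (ne_of_notMem_nearby hL h)] at hpair
  push_cast at hpair
  have hnonneg : 0 ≤ 1 - (1 - δ) * (2 * L) / n := by
    exact_mod_cast hpair ▸ sum_nonneg fun r _ => readWeight_nonneg hδ0 hδ1 r
  have hprod : ∀ x : Fin K → ReadData n L, missIndicator m x * missIndicator m' x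
      = if ∀ i, ∀ a ∈ ({m, m'} : Finset (ZMod n)), (x i).Misses a then 1 else 0 := by
    intro x
    simp only [missIndicator, mem_insert, mem_singleton, forall_eq_or_imp, forall_eq, forall_and]
    split_ifs <;> simp_all
  calc ∑ x : Fin K → ReadData n L, configWeight δ x * (missIndicator m x * missIndicator m' x)
      = (1 - (1 - δ) * (2 * L) / n) ^ K := by
        simp only [hprod, mul_ite, mul_one, mul_zero, ← sum_filter]
        rw [← hpair]
        convert sum_configWeight_filter_forall (K := K) (δ := δ)
          fun r => ∀ a ∈ ({m, m'} : Finset (ZMod n)), r.Misses a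
    _ ≤ ((1 - (1 - δ) * L / n) ^ 2) ^ K := by
        gcongr
        rw [show (1 - δ) * (2 * (L : ℝ)) / n = 2 * ((1 - δ) * L / n) by ring]
        nlinarith [sq_nonneg ((1 - δ) * (L : ℝ) / n)]
    _ = ((1 - (1 - δ) * L / n) ^ K) ^ 2 := by rw [← pow_mul, ← pow_mul, Nat.mul_comm]

theorem sum_configWeight_mul_coverage_sub_sq_le [NeZero n] (hδ0 : 0 ≤ δ) (hδ1 : δ ≤ 1)
    (hL : 0 < L) (hLn : L ≤ n) :
    ∑ x : Fin K → ReadData n L,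
        configWeight δ x * (coverage x - (1 - (1 - (1 - δ) * L / n) ^ K)) ^ 2
      ≤ (L : ℝ) ^ 2 / n := by
  set p := (1 - (1 - δ) * (L : ℝ) / n) ^ K
  have hn : (0 : ℝ) < n := Nat.cast_pos.mpr (Nat.pos_of_ne_zero (NeZero.ne n))
  have hdev : ∀ x : Fin K → ReadData n L,
      coverage x - (1 - p) = -(∑ m, (missIndicator m x - p)) / n := by
    intro x
    rw [coverage_eq, sum_sub_distrib, sum_const, card_univ, ZMod.card, nsmul_eq_mul]
    field_simp
    ring
  have hsecond := sum_mul_sum_sub_sq_le_sum_card (configWeight_nonneg hδ0 hδ1) sum_configWeight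
    (g := missIndicator (K := K)) (fun m x => by unfold missIndicator; split_ifs <;> simp)
    (sum_configWeight_mul_missIndicator hLn) (nearby L)
    (fun m m' h => sum_configWeight_mul_missIndicator_mul_le hδ0 hδ1 hL hLn h)
  calc ∑ x : Fin K → ReadData n L, configWeight δ x * (coverage x - (1 - p)) ^ 2
      = (∑ x : Fin K → ReadData n L,
          configWeight δ x * (∑ m, (missIndicator m x - p)) ^ 2) / n ^ 2 := by
        simp only [hdev, div_pow, neg_sq, sum_div, mul_div_assoc]
    _ ≤ (∑ m : ZMod n, (#(nearby L m) : ℝ)) / n ^ 2 := by gcongr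
    _ ≤ (∑ _m : ZMod n, (L : ℝ) ^ 2) / n ^ 2 := by
        gcongr with m
        exact_mod_cast card_nearby_le m
    _ = L ^ 2 / n := by
        rw [sum_const, card_univ, ZMod.card, nsmul_eq_mul]
        field_simp

def readConfig (M : SSE n K L δ) (ω : M.Ω) : Fin K → ReadData n L :=
  fun i => (M.S i ω, fun j => M.E i j ω)

theorem measurable_readConfig (M : SSE n K L δ) : Measurable M.readConfig :=
  measurable_pi_lambda _ fun i => (M.measS i).prodMk
    (measurable_pi_lambda _ fun j => M.measE i j)

theorem measure_E_preimage_singleton (M : SSE n K L δ) (hδ0 : 0 ≤ δ) (i : Fin K) (j : Fin L)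
    (b : Bool) : M.μ (M.E i j ⁻¹' {b}) = ENNReal.ofReal (erasureWeight δ b) := by
  cases b
  · have hc : M.E i j ⁻¹' {false} = {ω | M.E i j ω = true}ᶜ := by ext; simp
    rw [hc, measure_compl (s := {ω | M.E i j ω = true})
      ((M.measE i j) (measurableSet_singleton true)) (measure_ne_top _ _),
      measure_univ, M.bernE i j, erasureWeight, if_neg Bool.false_ne_true,
      ENNReal.ofReal_sub _ hδ0, ENNReal.ofReal_one]
  · exact M.bernE i j

theorem measure_readConfig_preimage_singleton [NeZero n] (M : SSE n K L δ) (hδ0 : 0 ≤ δ)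
    (hδ1 : δ ≤ 1) (x : Fin K → ReadData n L) :
    M.μ (M.readConfig ⁻¹' {x}) = ENNReal.ofReal (configWeight δ x) := by
  let target : ∀ t : Fin K ⊕ (Fin K × Fin L), Set (sseType n K L t)
    | .inl i => {(x i).1}
    | .inr p => {(x p.1).2 p.2}
  have hmeas : ∀ t ∈ (univ : Finset (Fin K ⊕ (Fin K × Fin L))),
      MeasurableSet[sseTypeMS n K L t] (target t) := by
    rintro (i | p) _
    exacts [measurableSet_singleton (α := ZMod n) _, measurableSet_singleton (α := Bool) _]
  have hset : M.readConfig ⁻¹' {x} = ⋂ t ∈ (univ : Finset (Fin K ⊕ (Fin K × Fin L))),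
      sseVars M.S M.E t ⁻¹' target t := by
    ext ω
    simp only [Set.mem_preimage, Set.mem_singleton_iff, Set.mem_iInter, mem_univ,
      forall_true_left, Sum.forall, Prod.forall, readConfig, funext_iff, Prod.ext_iff, sseVars,
      target, forall_and]
    exact Iff.rfl
  have hn : (0 : ℝ) < n := Nat.cast_pos.mpr (Nat.pos_of_ne_zero (NeZero.ne n))
  rw [hset, iIndepFun_iff_measure_inter_preimage_eq_mul.mp M.indep univ hmeas,
    Fintype.prod_sum_type, Fintype.prod_prod_type, ← prod_mul_distrib, configWeight,
    ENNReal.ofReal_prod_of_nonneg fun i _ => readWeight_nonneg hδ0 hδ1 _]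
  refine prod_congr rfl fun i _ => ?_
  rw [readWeight, ENNReal.ofReal_mul (by positivity), ENNReal.ofReal_inv_of_pos hn,
    ENNReal.ofReal_natCast, ENNReal.ofReal_prod_of_nonneg fun j _ => erasureWeight_nonneg hδ0 hδ1 _]
  exact congrArg₂ _ (M.unifS i _)
    (prod_congr rfl fun j _ => M.measure_E_preimage_singleton hδ0 i j _)

theorem toReal_measure_readConfig [NeZero n] (M : SSE n K L δ) (hδ0 : 0 ≤ δ) (hδ1 : δ ≤ 1)
    (Q : (Fin K → ReadData n L) → Prop) [DecidablePred Q] :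
    (M.μ {ω | Q (M.readConfig ω)}).toReal = ∑ x with Q x, configWeight δ x := by
  have hset : {ω | Q (M.readConfig ω)} = ⋃ x ∈ univ.filter Q, M.readConfig ⁻¹' {x} := by
    ext ω; simp
  rw [hset, measure_biUnion_finset (fun x _ y _ hxy => Set.disjoint_singleton.mpr hxy |>.preimage _)
    fun x _ => M.measurable_readConfig (measurableSet_singleton x)]
  simp only [M.measure_readConfig_preimage_singleton hδ0 hδ1]
  rw [← ENNReal.ofReal_sum_of_nonneg fun x _ => configWeight_nonneg hδ0 hδ1 x,
    ENNReal.toReal_ofReal (sum_nonneg fun x _ => configWeight_nonneg hδ0 hδ1 x)]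

theorem Phi_eq_coverage [NeZero n] (M : SSE n K L δ) (ω : M.Ω) :
    M.Phi ω = coverage (M.readConfig ω) := by
  have hset : {m | M.VisiblyCovered ω m}
      = ↑({m | ∃ i, ¬ (M.readConfig ω i).Misses m} : Finset (ZMod n)) := by
    ext m
    simp [VisiblyCovered, readConfig, ReadData.Misses]
  rw [Phi, coveredCount, coverage, hset, Set.ncard_coe_finset]

theorem toReal_measure_lt_abs_Phi_sub_le [NeZero n] (M : SSE n K L δ) (hδ0 : 0 ≤ δ)
    (hδ1 : δ ≤ 1) (hL : 0 < L) (hLn : L ≤ n) {t : ℝ} (ht : 0 < t) :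
    (M.μ {ω | t < |M.Phi ω - (1 - (1 - (1 - δ) * L / n) ^ K)|}).toReal
      ≤ (L : ℝ) ^ 2 / n / t ^ 2 := by
  simp only [M.Phi_eq_coverage]
  refine (M.toReal_measure_readConfig hδ0 hδ1
    fun x => t < |coverage x - (1 - (1 - (1 - δ) * L / n) ^ K)|).trans_le ?_
  exact (sum_filter_lt_abs_le_sum_mul_sq_div (configWeight_nonneg hδ0 hδ1) _ ht).trans
    (div_le_div_of_nonneg_right (sum_configWeight_mul_coverage_sub_sq_le hδ0 hδ1 hL hLn)
      (by positivity))

end SSE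

/-- Concentration of visible coverage (Lemma 2). -/
theorem visible_coverage_concentration
    (c Lbar δ : ℝ) (hc : 0 < c) (hLbar : 0 < Lbar) (hδ0 : 0 ≤ δ) (hδ1 : δ < 1)
    (model : ∀ n : ℕ, 2 ≤ n → SSE n (Kof c Lbar n) (Lof Lbar n) δ)
    (ε : ℝ) (hε : 0 < ε) :
    Tendsto (fun n : ℕ =>
        if h : 2 ≤ n then
          ((model n h).μ {ω |
            ε * (1 - Real.exp (-(c * (1 - δ)))) <
              |(model n h).Phi ω - (1 - Real.exp (-(c * (1 - δ))))|}).toReal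
        else 0) atTop (nhds 0) := by
  set A := 1 - Real.exp (-(c * (1 - δ)))
  have hA : 0 < A :=
    sub_pos.mpr (Real.exp_lt_one_iff.mpr (neg_lt_zero.mpr (mul_pos hc (by linarith))))
  set t := ε * A / 2
  have ht : 0 < t := by positivity
  have htA : ε * A = 2 * t := by ring
  have hclose : ∀ᶠ n : ℕ in atTop,
      |(1 - (1 - (1 - δ) * Lof Lbar n / n) ^ Kof c Lbar n) - A| < t := by
    have := ((tendsto_missProb hc.le hLbar δ).const_sub 1).sub_const A
    rw [sub_self] at this
    simpa using this.abs.eventually (gt_mem_nhds (show |(0 : ℝ)| < t by simpa))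
  have hLle : ∀ᶠ n : ℕ in atTop, Lof Lbar n ≤ n := by
    filter_upwards [(tendsto_Lof_div hLbar.le).eventually (gt_mem_nhds one_pos),
      eventually_gt_atTop 0] with n hn hn0
    exact_mod_cast ((div_lt_one (by positivity)).mp hn).le
  refine squeeze_zero' (Eventually.of_forall fun n => ?_) ?_
    ((tendsto_Lof_sq_div hLbar.le).div_const (t ^ 2) |>.trans (by simp))
  · split_ifs <;> simp
  filter_upwards [hclose, hLle, eventually_ge_atTop 2] with n hclose hLn hn
  have : NeZero n := ⟨by omega⟩
  rw [dif_pos hn]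
  refine (ENNReal.toReal_mono (measure_ne_top _ _) (measure_mono fun ω hω => ?_)).trans
    ((model n hn).toReal_measure_lt_abs_Phi_sub_le hδ0 hδ1.le (Lof_pos hLbar hn) hLn ht)
  have := abs_sub_le ((model n hn).Phi ω) (1 - (1 - (1 - δ) * Lof Lbar n / n) ^ Kof c Lbar n) A
  simp only [Set.mem_ofPred_eq] at hω ⊢
  linarith
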